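/- arXiv:2106.14449 — 9 statements merged into one kernel-verified Lean document; each statement's English description precedes it below -/
import Mathlib

section
/- Let G be a group, a, b ∈ G, and let q ≥ 1 and n ≥ 0 be integers. Suppose that [b, (ab)^q a^{n+2}(ba)^q] = 1, i.e., b commutes with (ab)^q a^{n+2}(ba)^q. If [b, a] ≠ 1, then [b, a] is a generalized torsion element of G. -/
/-- `g` is a generalized torsion element: `g ≠ 1` and some nonempty finite product of
conjugates of `g` equals the identity. -/
def IsGeneralizedTorsion {G : Type*} [Group G] (g : G) : Prop :=
  g ≠ 1 ∧ ∃ hs : List G, hs ≠ [] ∧ (hs.map fun h => h⁻¹ * g * h).prod = 1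

section Aux

variable {G : Type*} [Group G]

/-- `x` is a nonempty product of conjugates of `c`. -/
def PPconj (c x : G) : Prop :=
  ∃ hs : List G, hs ≠ [] ∧ (hs.map fun h => h⁻¹ * c * h).prod = x

lemma ppconj_self (c : G) : PPconj c c :=
  ⟨[1], by simp, by simp⟩

lemma ppconj_mul {c x y : G} (hx : PPconj c x) (hy : PPconj c y) : PPconj c (x * y) := by
  obtain ⟨l1, h1, p1⟩ := hx
  obtain ⟨l2, _, p2⟩ := hy
  refine ⟨l1 ++ l2, ?_, by simp [p1, p2]⟩
  intro h
  exact h1 (List.append_eq_nil_iff.mp h).1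

lemma conj_prod (c h : G) (l : List G) :
    ((l.map (· * h)).map fun g => g⁻¹ * c * g).prod
      = h⁻¹ * ((l.map fun g => g⁻¹ * c * g).prod) * h := by
  induction l with
  | nil => simp
  | cons a l ih =>
      simp only [List.map_cons, List.prod_cons, ih]
      group

lemma ppconj_conj {c x : G} (h : G) (hx : PPconj c x) : PPconj c (h⁻¹ * x * h) := by
  obtain ⟨l, hl, p⟩ := hx
  exact ⟨l.map (· * h), by simpa using hl, by rw [conj_prod, p]⟩

lemma comm_mul (b u v : G) :
    b⁻¹ * (u * v)⁻¹ * b * (u * v)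
      = (b⁻¹ * v⁻¹ * b * v) * (v⁻¹ * (b⁻¹ * u⁻¹ * b * u) * v) := by
  group

lemma ppconj_comm_mul {c b u v : G} (hu : PPconj c (b⁻¹ * u⁻¹ * b * u))
    (hv : PPconj c (b⁻¹ * v⁻¹ * b * v)) : PPconj c (b⁻¹ * (u * v)⁻¹ * b * (u * v)) := by
  rw [comm_mul]
  exact ppconj_mul hv (ppconj_conj v hu)

lemma ppconj_comm_pow {c b x : G} (hx : PPconj c (b⁻¹ * x⁻¹ * b * x)) :
    ∀ m : ℕ, 1 ≤ m → PPconj c (b⁻¹ * (x ^ m)⁻¹ * b * (x ^ m)) := by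
  intro m hm
  induction m, hm using Nat.le_induction with
  | base => simpa using hx
  | succ m _ ih =>
      rw [pow_succ]
      exact ppconj_comm_mul ih hx

end Aux

/-- If `b` commutes with `(ab)^q a^{n+2} (ba)^q` (with `q ≥ 1`, `n ≥ 0`) and
`[b, a] ≠ 1`, then `[b, a]` is a generalized torsion element. -/
theorem generalizedTorsion_of_relation {G : Type*} [Group G]
    (a b : G) (q n : ℕ) (hq : 1 ≤ q)
    (hrel : b⁻¹ * ((a * b) ^ q * a ^ (n + 2) * (b * a) ^ q)⁻¹ * b *
        ((a * b) ^ q * a ^ (n + 2) * (b * a) ^ q) = 1)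
    (hne : b⁻¹ * a⁻¹ * b * a ≠ 1) :
    IsGeneralizedTorsion (b⁻¹ * a⁻¹ * b * a) := by
  set c := b⁻¹ * a⁻¹ * b * a with hc
  have ha : PPconj c (b⁻¹ * a⁻¹ * b * a) := ppconj_self c
  have hab : PPconj c (b⁻¹ * (a * b)⁻¹ * b * (a * b)) := by
    have : b⁻¹ * (a * b)⁻¹ * b * (a * b) = b⁻¹ * (b⁻¹ * a⁻¹ * b * a) * b := by group
    rw [this]
    exact ppconj_conj b ha
  have hba : PPconj c (b⁻¹ * (b * a)⁻¹ * b * (b * a)) := by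
    have : b⁻¹ * (b * a)⁻¹ * b * (b * a) = b⁻¹ * a⁻¹ * b * a := by group
    rw [this]
    exact ha
  have h1 := ppconj_comm_pow hab q hq
  have h2 := ppconj_comm_pow ha (n + 2) (by omega)
  have h3 := ppconj_comm_pow hba q hq
  have htot := ppconj_comm_mul (ppconj_comm_mul h1 h2) h3
  rw [hrel] at htot
  obtain ⟨l, hl, hp⟩ := htot
  exact ⟨hne, l, hl, hp⟩
end

section
/- Let G be a group, a, b ∈ G, and let q ≥ 1 and n ≥ 0 be integers. Suppose that [b, (ab)^q a^{n+2}(ba)^q] = 1 and that [b, a] ≠ 1. Then G is not bi-orderable. -/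
/-- A group is bi-orderable if it carries a strict total order invariant under
multiplication on both sides. -/
def IsBiOrderable (G : Type*) [Group G] : Prop :=
  ∃ r : G → G → Prop, IsStrictTotalOrder G r ∧
    ∀ a b g h : G, r g h → r (a * g * b) (a * h * b)

/-- If `b` commutes with `(ab)^q a^{n+2} (ba)^q` (with `q ≥ 1`, `n ≥ 0`) and
`[b, a] ≠ 1`, then `G` is not bi-orderable. -/
theorem not_biOrderable_of_relation {G : Type*} [Group G]
    (a b : G) (q n : ℕ) (hq : 1 ≤ q)
    (hrel : b⁻¹ * ((a * b) ^ q * a ^ (n + 2) * (b * a) ^ q)⁻¹ * b *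
        ((a * b) ^ q * a ^ (n + 2) * (b * a) ^ q) = 1)
    (hne : b⁻¹ * a⁻¹ * b * a ≠ 1) :
    ¬ IsBiOrderable G := by
  rintro ⟨r, hsto, hmul⟩
  have key : ∀ (s : G → G → Prop), IsStrictTotalOrder G s →
      (∀ x y g h : G, s g h → s (x * g * y) (x * h * y)) →
      s 1 (b⁻¹ * a⁻¹ * b * a) → False := by
    intro s hs hsm hc
    have htr : ∀ {x y z : G}, s x y → s y z → s x z :=
      fun h1 h2 => hs.trans _ _ _ h1 h2
    have posmul : ∀ x y : G, s 1 x → s 1 y → s 1 (x * y) := by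
      intro x y hx hy
      exact htr hx (by simpa using hsm x 1 1 y hy)
    have posconj : ∀ g x : G, s 1 x → s 1 (g⁻¹ * x * g) := by
      intro g x hx
      simpa using hsm g⁻¹ g 1 x hx
    set P : G → Prop := fun g => s 1 (b⁻¹ * g⁻¹ * b * g) with hP
    have Pmul : ∀ u v : G, P u → P v → P (u * v) := by
      intro u v hu hv
      have he : b⁻¹ * (u * v)⁻¹ * b * (u * v) =
          (b⁻¹ * v⁻¹ * b * v) * (v⁻¹ * (b⁻¹ * u⁻¹ * b * u) * v) := by group
      show s 1 (b⁻¹ * (u * v)⁻¹ * b * (u * v))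
      rw [he]
      exact posmul _ _ hv (posconj v _ hu)
    have PmulR : ∀ u v : G, P u → b⁻¹ * v⁻¹ * b * v = 1 → P (u * v) := by
      intro u v hu hv1
      have he : b⁻¹ * (u * v)⁻¹ * b * (u * v) =
          (b⁻¹ * v⁻¹ * b * v) * (v⁻¹ * (b⁻¹ * u⁻¹ * b * u) * v) := by group
      show s 1 (b⁻¹ * (u * v)⁻¹ * b * (u * v))
      rw [he, hv1, one_mul]
      exact posconj v _ hu
    have PmulL : ∀ u v : G, b⁻¹ * u⁻¹ * b * u = 1 → P v → P (u * v) := by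
      intro u v hu1 hv
      have he : b⁻¹ * (u * v)⁻¹ * b * (u * v) =
          (b⁻¹ * v⁻¹ * b * v) * (v⁻¹ * (b⁻¹ * u⁻¹ * b * u) * v) := by group
      show s 1 (b⁻¹ * (u * v)⁻¹ * b * (u * v))
      rw [he, hu1]
      simpa using hv
    have kb : b⁻¹ * b⁻¹ * b * b = 1 := by group
    have Pa : P a := hc
    have Pab : P (a * b) := PmulR a b Pa kb
    have Pba : P (b * a) := PmulL b a kb Pa
    have Ppow : ∀ (x : G) (m : ℕ), P x → P (x ^ (m + 1)) := by
      intro x m hx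
      induction m with
      | zero => simpa using hx
      | succ k ih =>
          have hxe : x ^ (k + 1 + 1) = x ^ (k + 1) * x := pow_succ x (k + 1)
          rw [hxe]
          exact Pmul _ _ ih hx
    obtain ⟨q', rfl⟩ : ∃ q', q = q' + 1 :=
      ⟨q - 1, (Nat.succ_pred_eq_of_pos hq).symm⟩
    have Pw : P ((a * b) ^ (q' + 1) * a ^ (n + 2) * (b * a) ^ (q' + 1)) :=
      Pmul _ _ (Pmul _ _ (Ppow _ q' Pab) (Ppow a (n + 1) Pa)) (Ppow _ q' Pba)
    have hone : s 1 (1 : G) := by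
      have hw : s 1 (b⁻¹ * ((a * b) ^ (q' + 1) * a ^ (n + 2) * (b * a) ^ (q' + 1))⁻¹ * b *
          ((a * b) ^ (q' + 1) * a ^ (n + 2) * (b * a) ^ (q' + 1))) := Pw
      rw [hrel] at hw
      exact hw
    exact hs.irrefl 1 hone
  rcases (haveI := hsto; trichotomous_of r 1 (b⁻¹ * a⁻¹ * b * a)) with h | h | h
  · exact key r hsto hmul h
  · exact hne h.symm
  · refine key (flip r) ?_ (fun x y g h hgh => hmul x y h g hgh) h
    exact { irrefl := fun x => hsto.irrefl x,
            trans := fun x y z h1 h2 => hsto.trans _ _ _ h2 h1,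
            trichotomous := fun x y h1 h2 => (hsto.trichotomous y x h1 h2).symm }
end

section
/- Let G be a group, let a, c, d ∈ G, and let p ≥ 2, m ≥ 1, s ≥ 1 be integers. If a^{m+1} d^s a^{m+1} = d c^m d^s c^m and a^{(p-1)(m+1)+1} d^s a^{m+1} = c^{(p-1)m+1} d^s c^m, then a^{(p-2)(m+1)+1} d = c^{(p-2)m+1}. -/
/-- From the two relations of the twisted torus knot group presentation one deduces
`a^{(p-2)(m+1)+1} d = c^{(p-2)m+1}` (for `p ≥ 2`, `m ≥ 1`, `s ≥ 1`). -/
theorem twisted_torus_relation_consequence {G : Type*} [Group G]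
    (a c d : G) (p m s : ℕ) (hp : 2 ≤ p) (hm : 1 ≤ m) (hs : 1 ≤ s)
    (h1 : a ^ (m + 1) * d ^ s * a ^ (m + 1) = d * c ^ m * d ^ s * c ^ m)
    (h2 : a ^ ((p - 1) * (m + 1) + 1) * d ^ s * a ^ (m + 1) =
        c ^ ((p - 1) * m + 1) * d ^ s * c ^ m) :
    a ^ ((p - 2) * (m + 1) + 1) * d = c ^ ((p - 2) * m + 1) := by
  obtain ⟨k, rfl⟩ : ∃ k, p = k + 2 := ⟨p - 2, by omega⟩
  have e1 : (k + 2 - 1) * (m + 1) + 1 = (k * (m + 1) + 1) + (m + 1) := by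
    simp [Nat.add_sub_cancel]; ring
  have e2 : (k + 2 - 1) * m + 1 = (k * m + 1) + m := by
    simp [Nat.add_sub_cancel]; ring
  have e3 : k + 2 - 2 = k := by omega
  rw [e1, e2] at h2
  rw [e3]
  have h3 : a ^ (k * (m + 1) + 1) * d * (c ^ m * d ^ s * c ^ m)
      = c ^ (k * m + 1) * (c ^ m * d ^ s * c ^ m) := by
    calc a ^ (k * (m + 1) + 1) * d * (c ^ m * d ^ s * c ^ m)
        = a ^ (k * (m + 1) + 1) * (d * c ^ m * d ^ s * c ^ m) := by group
      _ = a ^ (k * (m + 1) + 1) * (a ^ (m + 1) * d ^ s * a ^ (m + 1)) := by rw [h1]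
      _ = a ^ (k * (m + 1) + 1 + (m + 1)) * d ^ s * a ^ (m + 1) := by
            rw [pow_add]; group
      _ = c ^ (k * m + 1 + m) * d ^ s * c ^ m := h2
      _ = c ^ (k * m + 1) * (c ^ m * d ^ s * c ^ m) := by rw [pow_add]; group
  exact mul_right_cancel h3
end

section
/- Let p ≥ 2, m ≥ 1, s ≥ 1 be integers. The group presented by three generators a, c, d with the two relations a^{m+1} d^s a^{m+1} = d c^m d^s c^m and a^{(p-1)(m+1)+1} d^s a^{m+1} = c^{(p-1)m+1} d^s c^m is isomorphic to the group presented by two generators a, c with the single relation a^{(p-1)(m+1)+1}(a^{-((p-2)(m+1)+1)} c^{(p-2)m+1})^s a^{m+1} = c^{(p-1)m+1}(a^{-((p-2)(m+1)+1)} c^{(p-2)m+1})^s c^m. -/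
private lemma rel_one {α : Type*} (rels : Set (FreeGroup α)) {r : FreeGroup α}
    (h : r ∈ rels) : PresentedGroup.mk rels r = 1 :=
  (QuotientGroup.eq_one_iff _).mpr (Subgroup.subset_normalClosure h)

private lemma aux_two {G : Type*} [Group G] (a c : G) (q m s : ℕ)
    (h : a ^ ((q+1)*(m+1)+1) * ((a ^ (q*(m+1)+1))⁻¹ * c ^ (q*m+1)) ^ s * a ^ (m+1)
       = c ^ ((q+1)*m+1) * ((a ^ (q*(m+1)+1))⁻¹ * c ^ (q*m+1)) ^ s * c ^ m) :
    a ^ (m+1) * ((a ^ (q*(m+1)+1))⁻¹ * c ^ (q*m+1)) ^ s * a ^ (m+1)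
      = ((a ^ (q*(m+1)+1))⁻¹ * c ^ (q*m+1)) * c ^ m
          * ((a ^ (q*(m+1)+1))⁻¹ * c ^ (q*m+1)) ^ s * c ^ m := by
  set D := (a ^ (q*(m+1)+1))⁻¹ * c ^ (q*m+1) with hD
  have hc : c ^ ((q+1)*m+1) = c ^ (q*m+1) * c ^ m := by
    rw [← pow_add]; ring_nf
  have ha : a ^ ((q+1)*(m+1)+1) = a ^ (q*(m+1)+1) * a ^ (m+1) := by
    rw [← pow_add]; ring_nf
  calc a ^ (m+1) * D ^ s * a ^ (m+1)
      = (a ^ (q*(m+1)+1))⁻¹ * (a ^ ((q+1)*(m+1)+1) * D ^ s * a ^ (m+1)) := by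
        rw [ha]; group
    _ = (a ^ (q*(m+1)+1))⁻¹ * (c ^ ((q+1)*m+1) * D ^ s * c ^ m) := by rw [h]
    _ = D * c ^ m * D ^ s * c ^ m := by rw [hc, hD]; group

private lemma aux_three {G : Type*} [Group G] (a c d : G) (q m s : ℕ)
    (h1 : a ^ (m+1) * d ^ s * a ^ (m+1) = d * c ^ m * d ^ s * c ^ m)
    (h2 : a ^ ((q+1)*(m+1)+1) * d ^ s * a ^ (m+1)
        = c ^ ((q+1)*m+1) * d ^ s * c ^ m) :
    d = (a ^ (q*(m+1)+1))⁻¹ * c ^ (q*m+1) := by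
  have hc : c ^ ((q+1)*m+1) = c ^ (q*m+1) * c ^ m := by rw [← pow_add]; ring_nf
  have ha : a ^ ((q+1)*(m+1)+1) = a ^ (q*(m+1)+1) * a ^ (m+1) := by
    rw [← pow_add]; ring_nf
  have key : a ^ (q*(m+1)+1) * (d * c ^ m * d ^ s * c ^ m)
      = c ^ (q*m+1) * c ^ m * d ^ s * c ^ m := by
    rw [← h1, ← hc]
    calc a ^ (q*(m+1)+1) * (a ^ (m+1) * d ^ s * a ^ (m+1))
        = a ^ ((q+1)*(m+1)+1) * d ^ s * a ^ (m+1) := by rw [ha]; group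
      _ = c ^ ((q+1)*m+1) * d ^ s * c ^ m := h2
  have key2 : a ^ (q*(m+1)+1) * d * c ^ m = c ^ (q*m+1) * c ^ m := by
    have h' := key
    rw [show a ^ (q*(m+1)+1) * (d * c ^ m * d ^ s * c ^ m)
        = (a ^ (q*(m+1)+1) * d * c ^ m) * d ^ s * c ^ m by group] at h'
    exact mul_right_cancel (mul_right_cancel h')
  have key3 : a ^ (q*(m+1)+1) * d = c ^ (q*m+1) := mul_right_cancel key2
  rw [← key3]; group

/-- For `p ≥ 2`, `m ≥ 1`, `s ≥ 1`, the group `⟨a, c, d ∣ a^{m+1}d^s a^{m+1} = dc^m d^s c^m,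
a^{(p-1)(m+1)+1}d^s a^{m+1} = c^{(p-1)m+1}d^s c^m⟩` (generators `a = of 0`, `c = of 1`,
`d = of 2`) is isomorphic to the two-generator group
`⟨a, c ∣ a^{(p-1)(m+1)+1}(a^{-((p-2)(m+1)+1)}c^{(p-2)m+1})^s a^{m+1}
      = c^{(p-1)m+1}(a^{-((p-2)(m+1)+1)}c^{(p-2)m+1})^s c^m⟩`
(generators `a = of 0`, `c = of 1`). -/
theorem presentation_eliminate_generator (p m s : ℕ)
    (hp : 2 ≤ p) (hm : 1 ≤ m) (hs : 1 ≤ s) :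
    Nonempty
      (PresentedGroup
        ({ FreeGroup.of (0 : Fin 3) ^ (m + 1) * FreeGroup.of (2 : Fin 3) ^ s *
             FreeGroup.of (0 : Fin 3) ^ (m + 1) *
             (FreeGroup.of (2 : Fin 3) * FreeGroup.of (1 : Fin 3) ^ m *
               FreeGroup.of (2 : Fin 3) ^ s * FreeGroup.of (1 : Fin 3) ^ m)⁻¹,
           FreeGroup.of (0 : Fin 3) ^ ((p - 1) * (m + 1) + 1) *
             FreeGroup.of (2 : Fin 3) ^ s * FreeGroup.of (0 : Fin 3) ^ (m + 1) *
             (FreeGroup.of (1 : Fin 3) ^ ((p - 1) * m + 1) *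
               FreeGroup.of (2 : Fin 3) ^ s * FreeGroup.of (1 : Fin 3) ^ m)⁻¹ } :
          Set (FreeGroup (Fin 3))) ≃*
       PresentedGroup
        ({ FreeGroup.of (0 : Fin 2) ^ ((p - 1) * (m + 1) + 1) *
             ((FreeGroup.of (0 : Fin 2) ^ ((p - 2) * (m + 1) + 1))⁻¹ *
               FreeGroup.of (1 : Fin 2) ^ ((p - 2) * m + 1)) ^ s *
             FreeGroup.of (0 : Fin 2) ^ (m + 1) *
             (FreeGroup.of (1 : Fin 2) ^ ((p - 1) * m + 1) *
               ((FreeGroup.of (0 : Fin 2) ^ ((p - 2) * (m + 1) + 1))⁻¹ *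
                 FreeGroup.of (1 : Fin 2) ^ ((p - 2) * m + 1)) ^ s *
               FreeGroup.of (1 : Fin 2) ^ m)⁻¹ } :
          Set (FreeGroup (Fin 2)))) := by
  obtain ⟨q, rfl⟩ : ∃ q, p = q + 2 := ⟨p - 2, by omega⟩
  set r1 : FreeGroup (Fin 3) :=
    FreeGroup.of (0 : Fin 3) ^ (m + 1) * FreeGroup.of (2 : Fin 3) ^ s *
      FreeGroup.of (0 : Fin 3) ^ (m + 1) *
      (FreeGroup.of (2 : Fin 3) * FreeGroup.of (1 : Fin 3) ^ m *
        FreeGroup.of (2 : Fin 3) ^ s * FreeGroup.of (1 : Fin 3) ^ m)⁻¹ with hr1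
  set r2 : FreeGroup (Fin 3) :=
    FreeGroup.of (0 : Fin 3) ^ ((q + 1) * (m + 1) + 1) *
      FreeGroup.of (2 : Fin 3) ^ s * FreeGroup.of (0 : Fin 3) ^ (m + 1) *
      (FreeGroup.of (1 : Fin 3) ^ ((q + 1) * m + 1) *
        FreeGroup.of (2 : Fin 3) ^ s * FreeGroup.of (1 : Fin 3) ^ m)⁻¹ with hr2
  set r0 : FreeGroup (Fin 2) :=
    FreeGroup.of (0 : Fin 2) ^ ((q + 1) * (m + 1) + 1) *
      ((FreeGroup.of (0 : Fin 2) ^ (q * (m + 1) + 1))⁻¹ *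
        FreeGroup.of (1 : Fin 2) ^ (q * m + 1)) ^ s *
      FreeGroup.of (0 : Fin 2) ^ (m + 1) *
      (FreeGroup.of (1 : Fin 2) ^ ((q + 1) * m + 1) *
        ((FreeGroup.of (0 : Fin 2) ^ (q * (m + 1) + 1))⁻¹ *
          FreeGroup.of (1 : Fin 2) ^ (q * m + 1)) ^ s *
        FreeGroup.of (1 : Fin 2) ^ m)⁻¹ with hr0
  set rels3 : Set (FreeGroup (Fin 3)) := {r1, r2} with hrels3
  set rels2 : Set (FreeGroup (Fin 2)) := {r0} with hrels2
  -- generators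
  set A : PresentedGroup rels2 := PresentedGroup.of (0 : Fin 2) with hA
  set C : PresentedGroup rels2 := PresentedGroup.of (1 : Fin 2) with hC
  set a : PresentedGroup rels3 := PresentedGroup.of (0 : Fin 3) with ha
  set c : PresentedGroup rels3 := PresentedGroup.of (1 : Fin 3) with hc
  set d : PresentedGroup rels3 := PresentedGroup.of (2 : Fin 3) with hd
  -- relations in the two-generator group
  have hrelA : A ^ ((q+1)*(m+1)+1) * ((A ^ (q*(m+1)+1))⁻¹ * C ^ (q*m+1)) ^ s * A ^ (m+1)
      = C ^ ((q+1)*m+1) * ((A ^ (q*(m+1)+1))⁻¹ * C ^ (q*m+1)) ^ s * C ^ m := by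
    have h := rel_one rels2 (show r0 ∈ rels2 from rfl)
    rw [hr0] at h
    simp only [map_mul, map_pow, map_inv] at h
    rw [mul_inv_eq_one] at h
    exact h
  -- relations in the three-generator group
  have hrel1 : a ^ (m+1) * d ^ s * a ^ (m+1) = d * c ^ m * d ^ s * c ^ m := by
    have h := rel_one rels3 (show r1 ∈ rels3 from Set.mem_insert _ _)
    rw [hr1] at h
    simp only [map_mul, map_pow, map_inv] at h
    rw [mul_inv_eq_one] at h
    exact h
  have hrel2 : a ^ ((q+1)*(m+1)+1) * d ^ s * a ^ (m+1)
      = c ^ ((q+1)*m+1) * d ^ s * c ^ m := by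
    have h := rel_one rels3 (show r2 ∈ rels3 from Set.mem_insert_of_mem _ rfl)
    rw [hr2] at h
    simp only [map_mul, map_pow, map_inv] at h
    rw [mul_inv_eq_one] at h
    exact h
  have hdval : d = (a ^ (q*(m+1)+1))⁻¹ * c ^ (q*m+1) :=
    aux_three a c d q m s hrel1 hrel2
  -- the map from the three-generator group
  set f : Fin 3 → PresentedGroup rels2 :=
    ![A, C, (A ^ (q*(m+1)+1))⁻¹ * C ^ (q*m+1)] with hf
  have hfcond : ∀ r ∈ rels3, FreeGroup.lift f r = 1 := by
    intro r hr
    rcases hr with rfl | rfl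
    · rw [hr1]
      simp only [map_mul, map_pow, map_inv, FreeGroup.lift_apply_of, hf,
        Matrix.cons_val_zero, Matrix.cons_val_one, Matrix.head_cons,
        Matrix.cons_val_two, Matrix.tail_cons]
      rw [mul_inv_eq_one]
      exact aux_two A C q m s hrelA
    · rw [hr2]
      simp only [map_mul, map_pow, map_inv, FreeGroup.lift_apply_of, hf,
        Matrix.cons_val_zero, Matrix.cons_val_one, Matrix.head_cons,
        Matrix.cons_val_two, Matrix.tail_cons]
      rw [mul_inv_eq_one]
      exact hrelA
  set g : Fin 2 → PresentedGroup rels3 := ![a, c] with hg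
  have hgcond : ∀ r ∈ rels2, FreeGroup.lift g r = 1 := by
    intro r hr
    rcases hr with rfl
    rw [hr0]
    simp only [map_mul, map_pow, map_inv, FreeGroup.lift_apply_of, hg,
      Matrix.cons_val_zero, Matrix.cons_val_one, Matrix.head_cons]
    rw [mul_inv_eq_one, ← hdval]
    exact hrel2
  set φ : PresentedGroup rels3 →* PresentedGroup rels2 :=
    PresentedGroup.toGroup hfcond with hφ
  set ψ : PresentedGroup rels2 →* PresentedGroup rels3 :=
    PresentedGroup.toGroup hgcond with hψ
  have Φ0 : φ (PresentedGroup.of (0 : Fin 3)) = A := PresentedGroup.toGroup.of hfcond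
  have Φ1 : φ (PresentedGroup.of (1 : Fin 3)) = C := PresentedGroup.toGroup.of hfcond
  have Φ2 : φ (PresentedGroup.of (2 : Fin 3))
      = (A ^ (q*(m+1)+1))⁻¹ * C ^ (q*m+1) := PresentedGroup.toGroup.of hfcond
  have Ψ0 : ψ (PresentedGroup.of (0 : Fin 2)) = a := PresentedGroup.toGroup.of hgcond
  have Ψ1 : ψ (PresentedGroup.of (1 : Fin 2)) = c := PresentedGroup.toGroup.of hgcond
  refine ⟨MonoidHom.toMulEquiv φ ψ ?_ ?_⟩
  · ext x
    fin_cases x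
    · show ψ (φ (PresentedGroup.of (0 : Fin 3))) = PresentedGroup.of (0 : Fin 3)
      rw [Φ0]; exact Ψ0
    · show ψ (φ (PresentedGroup.of (1 : Fin 3))) = PresentedGroup.of (1 : Fin 3)
      rw [Φ1]; exact Ψ1
    · show ψ (φ (PresentedGroup.of (2 : Fin 3))) = PresentedGroup.of (2 : Fin 3)
      rw [Φ2, map_mul, map_inv, map_pow, map_pow]
      rw [show ψ A = a from Ψ0, show ψ C = c from Ψ1, ← hdval]
  · ext x
    fin_cases x
    · show φ (ψ (PresentedGroup.of (0 : Fin 2))) = PresentedGroup.of (0 : Fin 2)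
      rw [Ψ0]; exact Φ0
    · show φ (ψ (PresentedGroup.of (1 : Fin 2))) = PresentedGroup.of (1 : Fin 2)
      rw [Ψ1]; exact Φ1
end

section
/- Let p ≥ 2 and m ≥ 1 be integers, let G be a group, and let a, c ∈ G satisfy the relation a^{m+1} c^{(p-2)m+1} a^{m+1} = c^{(p-1)m+1} a^{-((p-2)(m+1)+1)} c^{(p-1)m+1}. If [c, a⁻¹] ≠ 1, then [c, a⁻¹] is a generalized torsion element of G. -/
section
variable {G : Type*} [Group G]

/-- `x` is a nonempty product of conjugates of `g`. -/
def InP (g x : G) : Prop :=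
  ∃ hs : List G, hs ≠ [] ∧ (hs.map fun h => h⁻¹ * g * h).prod = x

lemma prod_map_conjQ (s : List G) (y : G) :
    (s.map fun x => y⁻¹ * x * y).prod = y⁻¹ * s.prod * y := by
  induction s with
  | nil => simp
  | cons h t ih =>
    rw [List.map_cons, List.prod_cons, List.prod_cons, ih]
    group

lemma InP.base (g : G) : InP g g := ⟨[1], by simp, by simp⟩

lemma InP.mul {g x y : G} (hx : InP g x) (hy : InP g y) : InP g (x * y) := by
  obtain ⟨s, hsne, hs⟩ := hx
  obtain ⟨t, htne, ht⟩ := hy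
  exact ⟨s ++ t, by simp [hsne], by simp [hs, ht]⟩

lemma InP.conj {g x : G} (hx : InP g x) (y : G) : InP g (y⁻¹ * x * y) := by
  obtain ⟨s, hsne, hs⟩ := hx
  refine ⟨s.map (· * y), by simpa using hsne, ?_⟩
  rw [List.map_map]
  have hfun : ((fun h => h⁻¹ * g * h) ∘ (· * y))
      = (fun x => y⁻¹ * x * y) ∘ (fun h => h⁻¹ * g * h) := by
    funext h; simp only [Function.comp]; group
  rw [hfun, ← List.map_map, prod_map_conjQ, hs]

lemma InP.of_eq {g x y : G} (hx : InP g x) (h : x = y) : InP g y := h ▸ hx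

lemma inP_L1 (a c : G) {j : ℕ} (hj : 1 ≤ j) :
    InP (c⁻¹ * a * c * a⁻¹) (c⁻¹ * a ^ j * c * (a ^ j)⁻¹) := by
  induction j, hj using Nat.le_induction with
  | base => exact (InP.base _).of_eq (by group)
  | succ j hj ih =>
    refine (ih.mul ((InP.base (c⁻¹ * a * c * a⁻¹)).conj (a ^ j)⁻¹)).of_eq ?_
    group

lemma inP_L2 (a c : G) {i j : ℕ} (hi : 1 ≤ i) (hj : 1 ≤ j) :
    InP (c⁻¹ * a * c * a⁻¹) ((c ^ i)⁻¹ * a ^ j * c ^ i * (a ^ j)⁻¹) := by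
  induction i, hi using Nat.le_induction with
  | base => exact (inP_L1 a c hj).of_eq (by group)
  | succ i hi ih =>
    refine (((inP_L1 a c hj).conj (c ^ i)).mul ih).of_eq ?_
    group

lemma inP_gp (a c : G) : InP (c⁻¹ * a * c * a⁻¹) (c * a⁻¹ * c⁻¹ * a) :=
  ((InP.base _).conj (c⁻¹ * a)).of_eq (by group)

lemma inP_M1 (a c : G) {j : ℕ} (hj : 1 ≤ j) :
    InP (c⁻¹ * a * c * a⁻¹) (c * (a ^ j)⁻¹ * c⁻¹ * a ^ j) := by
  induction j, hj using Nat.le_induction with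
  | base => exact (inP_gp a c).of_eq (by group)
  | succ j hj ih =>
    refine (ih.mul ((inP_gp a c).conj (a ^ j))).of_eq ?_
    group

lemma inP_M2 (a c : G) {i j : ℕ} (hi : 1 ≤ i) (hj : 1 ≤ j) :
    InP (c⁻¹ * a * c * a⁻¹) (c ^ i * (a ^ j)⁻¹ * (c ^ i)⁻¹ * a ^ j) := by
  induction i, hi using Nat.le_induction with
  | base => exact (inP_M1 a c hj).of_eq (by group)
  | succ i hi ih =>
    refine (((inP_M1 a c hj).conj (c ^ i)⁻¹).mul ih).of_eq ?_
    group

lemma key_lemma (a c : G) (A B mm D : ℕ) (hA : 1 ≤ A) (hmm : 1 ≤ mm)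
    (hrel : a ^ A * c ^ B * a ^ A = c ^ (B + mm) * (a ^ D)⁻¹ * c ^ (B + mm)) :
    InP (c⁻¹ * a * c * a⁻¹) 1 := by
  have hCpos : 1 ≤ B + mm := le_add_left hmm
  have hinv : (a ^ D)⁻¹ = (c ^ (B + mm))⁻¹ * (a ^ A * c ^ B * a ^ A) * (c ^ (B + mm))⁻¹ := by
    rw [hrel]; group
  have hpos : a ^ D = c ^ (B + mm) * (a ^ A * c ^ B * a ^ A)⁻¹ * c ^ (B + mm) := by
    rw [hrel]; group
  -- w = c^(B+mm+mm) * (a^(A+A+D))⁻¹ ∈ P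
  have w1 : InP (c⁻¹ * a * c * a⁻¹) (c ^ (B + mm + mm) * (a ^ (A + A + D))⁻¹) := by
    have h := ((inP_L2 a c hCpos hA).mul
      ((inP_L2 a c hmm hA).conj (a ^ A)⁻¹)).conj (a ^ D)⁻¹
    refine h.of_eq ?_
    rw [show A + A + D = D + (A + A) from by omega, pow_add a D (A + A), mul_inv_rev, hinv]
    group
  have w2 : InP (c⁻¹ * a * c * a⁻¹) (a ^ (A + A + D) * (c ^ (B + mm + mm))⁻¹) := by
    have h := ((inP_M2 a c hCpos hA).mul
      ((inP_M2 a c hmm hA).conj (a ^ A))).conj (a ^ (A + A))⁻¹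
    refine h.of_eq ?_
    rw [pow_add a (A + A) D, hpos]
    group
  exact (w1.mul w2).of_eq (by group)

end

/-- If `a, c` satisfy the relation
`a^{m+1} c^{(p-2)m+1} a^{m+1} = c^{(p-1)m+1} a^{-((p-2)(m+1)+1)} c^{(p-1)m+1}`
(for `p ≥ 2`, `m ≥ 1`) and `[c, a⁻¹] ≠ 1`, then `[c, a⁻¹]` is a generalized torsion
element. -/
theorem generalizedTorsion_of_twisted_torus_relation {G : Type*} [Group G]
    (a c : G) (p m : ℕ) (hp : 2 ≤ p) (hm : 1 ≤ m)
    (hrel : a ^ (m + 1) * c ^ ((p - 2) * m + 1) * a ^ (m + 1) =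
        c ^ ((p - 1) * m + 1) * (a ^ ((p - 2) * (m + 1) + 1))⁻¹ *
          c ^ ((p - 1) * m + 1))
    (hne : c⁻¹ * a * c * a⁻¹ ≠ 1) :
    IsGeneralizedTorsion (c⁻¹ * a * c * a⁻¹) := by
  obtain ⟨q, rfl⟩ : ∃ q, p = q + 2 := ⟨p - 2, by omega⟩
  have h1 : q + 2 - 1 = q + 1 := by omega
  have h2 : q + 2 - 2 = q := by omega
  rw [h1, h2] at hrel
  have h3 : (q + 1) * m + 1 = q * m + 1 + m := by ring
  rw [h3] at hrel
  exact ⟨hne, key_lemma a c (m + 1) (q * m + 1) m (q * (m + 1) + 1)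
    (by omega) hm hrel⟩
end

section
/- Let s ≥ 0 be an integer. For any natural number s, the group presented by two generators a, c with the single relation a³(a⁻¹c)^s a² = c²(a⁻¹c)^s c is isomorphic to the group presented by two generators b, y with the single relation y² = b⁻¹ y b^{-(s+1)} y b⁻¹ y b^{-(s+1)} y b⁻¹. -/
private lemma keyA' {G : Type*} [Group G] (s : ℕ) (a b : G)
    (h : a ^ 3 * (a⁻¹ * (b * a)) ^ s * a ^ 2 = (b * a) ^ 2 * (a⁻¹ * (b * a)) ^ s * (b * a)) :
    (b ^ (s + 1) * a) ^ 2 =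
      b⁻¹ * (b ^ (s + 1) * a) * (b ^ (s + 1))⁻¹ *
        (b ^ (s + 1) * a) * b⁻¹ * (b ^ (s + 1) * a) *
        (b ^ (s + 1))⁻¹ * (b ^ (s + 1) * a) * b⁻¹ := by
  have hconj : (a⁻¹ * (b * a)) ^ s = a⁻¹ * b ^ s * a := by
    rw [show a⁻¹ * (b * a) = a⁻¹ * b * (a⁻¹)⁻¹ by group, conj_pow]; group
  rw [hconj] at h
  have h' : a ^ 2 * b ^ s * a ^ 2 = b * a * b ^ (s + 1) * a * b := by
    calc a ^ 2 * b ^ s * a ^ 2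
        = (a ^ 3 * (a⁻¹ * b ^ s * a) * a ^ 2) * a⁻¹ := by
          simp only [pow_succ, pow_zero, one_mul, pow_one]; group
      _ = ((b * a) ^ 2 * (a⁻¹ * b ^ s * a) * (b * a)) * a⁻¹ := by rw [h]
      _ = b * a * b ^ (s + 1) * a * b := by
          simp only [pow_succ, pow_zero, one_mul, pow_one]; group
  calc (b ^ (s + 1) * a) ^ 2
      = b ^ s * (b * a * b ^ (s + 1) * a * b) * b⁻¹ := by
        simp only [pow_succ, pow_zero, one_mul, pow_one]; group
    _ = b ^ s * (a ^ 2 * b ^ s * a ^ 2) * b⁻¹ := by rw [h']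
    _ = _ := by simp only [pow_succ, pow_zero, one_mul, pow_one]; group

private lemma keyA {G : Type*} [Group G] (s : ℕ) (a c : G)
    (h : a ^ 3 * (a⁻¹ * c) ^ s * a ^ 2 = c ^ 2 * (a⁻¹ * c) ^ s * c) :
    ((c * a⁻¹) ^ (s + 1) * a) ^ 2 =
      (c * a⁻¹)⁻¹ * ((c * a⁻¹) ^ (s + 1) * a) * ((c * a⁻¹) ^ (s + 1))⁻¹ *
        ((c * a⁻¹) ^ (s + 1) * a) * (c * a⁻¹)⁻¹ * ((c * a⁻¹) ^ (s + 1) * a) *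
        ((c * a⁻¹) ^ (s + 1))⁻¹ * ((c * a⁻¹) ^ (s + 1) * a) * (c * a⁻¹)⁻¹ := by
  exact keyA' s a (c * a⁻¹) (by rw [inv_mul_cancel_right]; exact h)

private lemma keyB {G : Type*} [Group G] (s : ℕ) (b y : G)
    (h : y ^ 2 = b⁻¹ * y * (b ^ (s + 1))⁻¹ * y * b⁻¹ * y * (b ^ (s + 1))⁻¹ * y * b⁻¹) :
    ((b ^ (s + 1))⁻¹ * y) ^ 3 * (((b ^ (s + 1))⁻¹ * y)⁻¹ * ((b ^ s)⁻¹ * y)) ^ s *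
        ((b ^ (s + 1))⁻¹ * y) ^ 2 =
      ((b ^ s)⁻¹ * y) ^ 2 * (((b ^ (s + 1))⁻¹ * y)⁻¹ * ((b ^ s)⁻¹ * y)) ^ s *
        ((b ^ s)⁻¹ * y) := by
  have hconj : (((b ^ (s + 1))⁻¹ * y)⁻¹ * ((b ^ s)⁻¹ * y)) ^ s = y⁻¹ * b ^ s * y := by
    rw [show ((b ^ (s + 1))⁻¹ * y)⁻¹ * ((b ^ s)⁻¹ * y) = y⁻¹ * b * (y⁻¹)⁻¹ by
      simp only [pow_succ, pow_zero, one_mul, pow_one]; group, conj_pow]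
    group
  rw [hconj]
  calc ((b ^ (s + 1))⁻¹ * y) ^ 3 * (y⁻¹ * b ^ s * y) * ((b ^ (s + 1))⁻¹ * y) ^ 2
      = (b ^ s)⁻¹ *
          (b⁻¹ * y * (b ^ (s + 1))⁻¹ * y * b⁻¹ * y * (b ^ (s + 1))⁻¹ * y * b⁻¹) *
          (b ^ s)⁻¹ * y := by
        simp only [pow_succ, pow_zero, one_mul, pow_one]; group
    _ = (b ^ s)⁻¹ * y ^ 2 * (b ^ s)⁻¹ * y := by rw [← h]
    _ = _ := by simp only [pow_succ, pow_zero, one_mul, pow_one]; group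

/-- For any natural number `s`, the group `⟨a, c ∣ a³(a⁻¹c)^s a² = c²(a⁻¹c)^s c⟩`
(generators `a = of 0`, `c = of 1`) is isomorphic to the group
`⟨b, y ∣ y² = b⁻¹ y b^{-(s+1)} y b⁻¹ y b^{-(s+1)} y b⁻¹⟩`
(generators `b = of 0`, `y = of 1`). -/
theorem presentation_K53_iso (s : ℕ) :
    Nonempty
      (PresentedGroup
        ({ FreeGroup.of (0 : Fin 2) ^ 3 *
             ((FreeGroup.of (0 : Fin 2))⁻¹ * FreeGroup.of (1 : Fin 2)) ^ s *
             FreeGroup.of (0 : Fin 2) ^ 2 *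
             (FreeGroup.of (1 : Fin 2) ^ 2 *
               ((FreeGroup.of (0 : Fin 2))⁻¹ * FreeGroup.of (1 : Fin 2)) ^ s *
               FreeGroup.of (1 : Fin 2))⁻¹ } :
          Set (FreeGroup (Fin 2))) ≃*
       PresentedGroup
        ({ FreeGroup.of (1 : Fin 2) ^ 2 *
             ((FreeGroup.of (0 : Fin 2))⁻¹ * FreeGroup.of (1 : Fin 2) *
               (FreeGroup.of (0 : Fin 2) ^ (s + 1))⁻¹ * FreeGroup.of (1 : Fin 2) *
               (FreeGroup.of (0 : Fin 2))⁻¹ * FreeGroup.of (1 : Fin 2) *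
               (FreeGroup.of (0 : Fin 2) ^ (s + 1))⁻¹ * FreeGroup.of (1 : Fin 2) *
               (FreeGroup.of (0 : Fin 2))⁻¹)⁻¹ } :
          Set (FreeGroup (Fin 2)))) := by
  set r1 : FreeGroup (Fin 2) :=
    FreeGroup.of (0 : Fin 2) ^ 3 *
      ((FreeGroup.of (0 : Fin 2))⁻¹ * FreeGroup.of (1 : Fin 2)) ^ s *
      FreeGroup.of (0 : Fin 2) ^ 2 *
      (FreeGroup.of (1 : Fin 2) ^ 2 *
        ((FreeGroup.of (0 : Fin 2))⁻¹ * FreeGroup.of (1 : Fin 2)) ^ s *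
        FreeGroup.of (1 : Fin 2))⁻¹ with hr1
  set r2 : FreeGroup (Fin 2) :=
    FreeGroup.of (1 : Fin 2) ^ 2 *
      ((FreeGroup.of (0 : Fin 2))⁻¹ * FreeGroup.of (1 : Fin 2) *
        (FreeGroup.of (0 : Fin 2) ^ (s + 1))⁻¹ * FreeGroup.of (1 : Fin 2) *
        (FreeGroup.of (0 : Fin 2))⁻¹ * FreeGroup.of (1 : Fin 2) *
        (FreeGroup.of (0 : Fin 2) ^ (s + 1))⁻¹ * FreeGroup.of (1 : Fin 2) *
        (FreeGroup.of (0 : Fin 2))⁻¹)⁻¹ with hr2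
  -- generators
  let A : PresentedGroup ({r1} : Set (FreeGroup (Fin 2))) := PresentedGroup.of 0
  let C : PresentedGroup ({r1} : Set (FreeGroup (Fin 2))) := PresentedGroup.of 1
  let B : PresentedGroup ({r2} : Set (FreeGroup (Fin 2))) := PresentedGroup.of 0
  let Y : PresentedGroup ({r2} : Set (FreeGroup (Fin 2))) := PresentedGroup.of 1
  -- the defining relations hold
  have hrel1 : A ^ 3 * (A⁻¹ * C) ^ s * A ^ 2 = C ^ 2 * (A⁻¹ * C) ^ s * C := by
    have h1 : PresentedGroup.mk ({r1} : Set (FreeGroup (Fin 2))) r1 = 1 :=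
      (QuotientGroup.eq_one_iff r1).mpr (Subgroup.subset_normalClosure (Set.mem_singleton _))
    rw [hr1] at h1
    simp only [map_mul, map_pow, map_inv, mul_inv_eq_one] at h1
    exact h1
  have hrel2 : Y ^ 2 = B⁻¹ * Y * (B ^ (s + 1))⁻¹ * Y * B⁻¹ * Y * (B ^ (s + 1))⁻¹ * Y * B⁻¹ := by
    have h2 : PresentedGroup.mk ({r2} : Set (FreeGroup (Fin 2))) r2 = 1 :=
      (QuotientGroup.eq_one_iff r2).mpr (Subgroup.subset_normalClosure (Set.mem_singleton _))
    rw [hr2] at h2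
    simp only [map_mul, map_pow, map_inv, mul_inv_eq_one] at h2
    exact h2
  -- maps on generators
  let f : Fin 2 → PresentedGroup ({r2} : Set (FreeGroup (Fin 2))) :=
    ![(B ^ (s + 1))⁻¹ * Y, (B ^ s)⁻¹ * Y]
  let g : Fin 2 → PresentedGroup ({r1} : Set (FreeGroup (Fin 2))) :=
    ![C * A⁻¹, (C * A⁻¹) ^ (s + 1) * A]
  have hf : ∀ r ∈ ({r1} : Set (FreeGroup (Fin 2))), FreeGroup.lift f r = 1 := by
    intro r hr
    rw [Set.mem_singleton_iff] at hr
    subst hr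
    rw [hr1]
    simp only [map_mul, map_pow, map_inv, FreeGroup.lift_apply_of, f, Matrix.cons_val_zero,
      Matrix.cons_val_one, Matrix.head_cons, mul_inv_eq_one]
    exact keyB s B Y hrel2
  have hg : ∀ r ∈ ({r2} : Set (FreeGroup (Fin 2))), FreeGroup.lift g r = 1 := by
    intro r hr
    rw [Set.mem_singleton_iff] at hr
    subst hr
    rw [hr2]
    simp only [map_mul, map_pow, map_inv, FreeGroup.lift_apply_of, g, Matrix.cons_val_zero,
      Matrix.cons_val_one, Matrix.head_cons, mul_inv_eq_one]
    exact keyA s A C hrel1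
  refine ⟨MonoidHom.toMulEquiv (PresentedGroup.toGroup hf) (PresentedGroup.toGroup hg) ?_ ?_⟩
  · ext x
    fin_cases x
    · show (PresentedGroup.toGroup hg) ((PresentedGroup.toGroup hf) (PresentedGroup.of 0)) =
        PresentedGroup.of 0
      simp only [PresentedGroup.toGroup.of, f, g, Matrix.cons_val_zero, Matrix.cons_val_one,
        Matrix.head_cons, map_mul, map_pow, map_inv, B, Y]
      show ((C * A⁻¹) ^ (s + 1))⁻¹ * ((C * A⁻¹) ^ (s + 1) * A) = A
      group
    · show (PresentedGroup.toGroup hg) ((PresentedGroup.toGroup hf) (PresentedGroup.of 1)) =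
        PresentedGroup.of 1
      simp only [PresentedGroup.toGroup.of, f, g, Matrix.cons_val_zero, Matrix.cons_val_one,
        Matrix.head_cons, map_mul, map_pow, map_inv, B, Y]
      show ((C * A⁻¹) ^ s)⁻¹ * ((C * A⁻¹) ^ (s + 1) * A) = C
      simp only [pow_succ, pow_zero, one_mul, pow_one]; group
  · ext x
    fin_cases x
    · show (PresentedGroup.toGroup hf) ((PresentedGroup.toGroup hg) (PresentedGroup.of 0)) =
        PresentedGroup.of 0
      simp only [PresentedGroup.toGroup.of, f, g, Matrix.cons_val_zero, Matrix.cons_val_one,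
        Matrix.head_cons, map_mul, map_pow, map_inv, A, C]
      show ((B ^ s)⁻¹ * Y) * ((B ^ (s + 1))⁻¹ * Y)⁻¹ = B
      simp only [pow_succ, pow_zero, one_mul, pow_one]; group
    · show (PresentedGroup.toGroup hf) ((PresentedGroup.toGroup hg) (PresentedGroup.of 1)) =
        PresentedGroup.of 1
      simp only [PresentedGroup.toGroup.of, f, g, Matrix.cons_val_zero, Matrix.cons_val_one,
        Matrix.head_cons, map_mul, map_pow, map_inv, A, C]
      have e : ((B ^ s)⁻¹ * Y) * ((B ^ (s + 1))⁻¹ * Y)⁻¹ = B := by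
        simp only [pow_succ, pow_zero, one_mul, pow_one]; group
      show (((B ^ s)⁻¹ * Y) * ((B ^ (s + 1))⁻¹ * Y)⁻¹) ^ (s + 1) * ((B ^ (s + 1))⁻¹ * Y) =
        Y
      rw [e]; group
end

section
/- Let s ≥ 0 be an integer, let G be a group, and let b, y ∈ G satisfy the relation y² = b⁻¹ y b^{-(s+1)} y b⁻¹ y b^{-(s+1)} y b⁻¹. If [y, b⁻¹] ≠ 1, then [y, b⁻¹] is a generalized torsion element of G. -/
/-- `x` is a nonempty product of conjugates of `g`. -/
private def ConjProd {G : Type*} [Group G] (g x : G) : Prop :=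
  ∃ l : List G, l ≠ [] ∧ (l.map fun h => h⁻¹ * g * h).prod = x

private theorem conjProd_self {G : Type*} [Group G] (g : G) : ConjProd g g :=
  ⟨[1], by simp, by simp⟩

private theorem conjProd_mul {G : Type*} [Group G] {g x y : G}
    (hx : ConjProd g x) (hy : ConjProd g y) : ConjProd g (x * y) := by
  obtain ⟨l1, h1, p1⟩ := hx
  obtain ⟨l2, _, p2⟩ := hy
  refine ⟨l1 ++ l2, by simp [h1], ?_⟩
  simp only [List.map_append, List.prod_append, p1, p2]

private theorem map_mul_conj_prod {G : Type*} [Group G] (g w : G) (l : List G) :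
    ((l.map (fun h => h * w)).map fun h => h⁻¹ * g * h).prod
      = w⁻¹ * (l.map fun h => h⁻¹ * g * h).prod * w := by
  induction l with
  | nil => simp
  | cons a t ih =>
    simp only [List.map_cons, List.prod_cons, ih]
    group

private theorem conjProd_conj {G : Type*} [Group G] {g x : G}
    (hx : ConjProd g x) (w : G) : ConjProd g (w⁻¹ * x * w) := by
  obtain ⟨l, h1, p⟩ := hx
  refine ⟨l.map (fun h => h * w), by simp [h1], ?_⟩
  rw [map_mul_conj_prod, p]

private theorem conjProd_of_eq {G : Type*} [Group G] {g x y : G}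
    (hx : ConjProd g x) (h : x = y) : ConjProd g y := h ▸ hx

/-- If `b, y` satisfy `y² = b⁻¹ y b^{-(s+1)} y b⁻¹ y b^{-(s+1)} y b⁻¹` (for `s ≥ 0`)
and `[y, b⁻¹] ≠ 1`, then `[y, b⁻¹]` is a generalized torsion element. -/
theorem generalizedTorsion_of_pretzel_relation {G : Type*} [Group G]
    (b y : G) (s : ℕ)
    (hrel : y ^ 2 =
        b⁻¹ * y * (b ^ (s + 1))⁻¹ * y * b⁻¹ * y * (b ^ (s + 1))⁻¹ * y * b⁻¹)
    (hne : y⁻¹ * b * y * b⁻¹ ≠ 1) :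
    IsGeneralizedTorsion (y⁻¹ * b * y * b⁻¹) := by
  have key : y * y =
      b⁻¹ * y * (b ^ (s + 1))⁻¹ * y * b⁻¹ * y * (b ^ (s + 1))⁻¹ * y * b⁻¹ := by
    rw [← pow_two]; exact hrel
  -- u_k = y⁻¹ c^{-k} y c^k (c = b⁻¹) is a product of conjugates of g for k ≥ 1
  have hu : ∀ k : ℕ, ConjProd (y⁻¹ * b * y * b⁻¹)
      (y⁻¹ * ((b⁻¹) ^ (k + 1))⁻¹ * y * (b⁻¹) ^ (k + 1)) := by
    intro k
    induction k with
    | zero => exact conjProd_of_eq (conjProd_self _) (by group)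
    | succ n ih =>
      exact conjProd_of_eq (conjProd_mul (conjProd_self _) (conjProd_conj ih b⁻¹))
        (by group)
  -- v_k = y c^k y⁻¹ c^{-k} is a product of conjugates of g for k ≥ 1
  have hv1 : ConjProd (y⁻¹ * b * y * b⁻¹)
      (y * (b⁻¹) ^ (0 + 1) * y⁻¹ * ((b⁻¹) ^ (0 + 1))⁻¹) :=
    conjProd_of_eq (conjProd_conj (conjProd_self _) (y * b⁻¹)⁻¹) (by group)
  have hv : ∀ k : ℕ, ConjProd (y⁻¹ * b * y * b⁻¹)
      (y * (b⁻¹) ^ (k + 1) * y⁻¹ * ((b⁻¹) ^ (k + 1))⁻¹) := by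
    intro k
    induction k with
    | zero => exact hv1
    | succ n ih =>
      exact conjProd_of_eq (conjProd_mul ih (conjProd_conj hv1 ((b⁻¹) ^ (n + 1))⁻¹))
        (by group)
  -- E = y⁻⁴ c^{-(2s+5)} y² is a product of conjugates of g
  have cpE : ConjProd (y⁻¹ * b * y * b⁻¹)
      (y⁻¹ * y⁻¹ * y⁻¹ * y⁻¹ * ((b⁻¹) ^ (2 * s + 5))⁻¹ * (y * y)) := by
    refine conjProd_of_eq (conjProd_mul (conjProd_mul (conjProd_mul
      (conjProd_conj (hu (2 * s + 3)) (y * y * y))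
      (conjProd_conj (hu (s + 2)) (y * y)))
      (conjProd_conj (hu (s + 1)) y))
      (hu 0)) ?_
    conv_rhs => rw [key]
    group
  -- D = y⁴ c^{2s+5} y⁻² is a product of conjugates of g
  have cpD : ConjProd (y⁻¹ * b * y * b⁻¹)
      (y ^ 4 * (b⁻¹) ^ (2 * s + 5) * (y * y)⁻¹) := by
    refine conjProd_of_eq (conjProd_mul (conjProd_mul (conjProd_mul
      (conjProd_conj (hv (2 * s + 3)) (y * y * y)⁻¹)
      (conjProd_conj (hv (s + 2)) (y * y)⁻¹))
      (conjProd_conj (hv (s + 1)) y⁻¹))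
      (hv 0)) ?_
    conv_rhs => rw [key]
    group
  -- combine: (y⁻⁶ D y⁶) * E = 1
  have cp1 : ConjProd (y⁻¹ * b * y * b⁻¹) (1 : G) :=
    conjProd_of_eq (conjProd_mul (conjProd_conj cpD (y ^ 6)) cpE)
      (by group)
  obtain ⟨l, hl, hp⟩ := cp1
  exact ⟨hne, l, hl, hp⟩
end

section
/- Let s ≥ 0 be an integer, let G be a group, and let b, y ∈ G satisfy the relation y² = b⁻¹ y b^{-(s+1)} y b⁻¹ y b^{-(s+1)} y b⁻¹, with [y, b⁻¹] ≠ 1. Then G is not bi-orderable. -/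
private lemma conj_pow_aux {G : Type*} [Group G] (a g : G) (n : ℕ) :
    (a⁻¹ * g * a) ^ n = a⁻¹ * g ^ n * a := by
  induction n with
  | zero => group
  | succ n ih => rw [pow_succ, pow_succ, ih]; group

private lemma pretzel_aux {G : Type*} [Group G] (b y : G) (s : ℕ)
    (hrel : y ^ 2 =
        b⁻¹ * y * (b ^ (s + 1))⁻¹ * y * b⁻¹ * y * (b ^ (s + 1))⁻¹ * y * b⁻¹)
    (r : G → G → Prop)
    (hirr : ∀ g : G, ¬ r g g)
    (htr : ∀ {g h k : G}, r g h → r h k → r g k)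
    (hinv : ∀ a c g h : G, r g h → r (a * g * c) (a * h * c))
    (hlt : r b (y⁻¹ * b * y)) : False := by
  -- basic monotonicity facts
  have mulL : ∀ (c g h : G), r g h → r (c * g) (c * h) := by
    intro c g h hgh; simpa using hinv c 1 g h hgh
  have mulR : ∀ (c g h : G), r g h → r (g * c) (h * c) := by
    intro c g h hgh; simpa using hinv 1 c g h hgh
  have hmul : ∀ {g h g' h' : G}, r g h → r g' h' → r (g * g') (h * h') := by
    intro g h g' h' h1 h2; exact htr (mulR g' g h h1) (mulL h g' h' h2)
  have hpow : ∀ (g h : G) (n : ℕ), r g h → r (g ^ (n + 1)) (h ^ (n + 1)) := by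
    intro g h n hgh
    induction n with
    | zero => simpa using hgh
    | succ n ih => rw [pow_succ g (n+1), pow_succ h (n+1)]; exact hmul ih hgh
  -- the conjugates d j = (y^j)⁻¹ * b * y^j form a strictly increasing chain
  have hch : ∀ j : ℕ, r ((y ^ j)⁻¹ * b * y ^ j) ((y ^ (j + 1))⁻¹ * b * y ^ (j + 1)) := by
    intro j
    have h := hinv ((y ^ j)⁻¹) (y ^ j) _ _ hlt
    have e1 : (y ^ j)⁻¹ * b * y ^ j = (y ^ j)⁻¹ * b * y ^ j := rfl
    have e2 : (y ^ j)⁻¹ * (y⁻¹ * b * y) * y ^ j = (y ^ (j + 1))⁻¹ * b * y ^ (j + 1) := by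
      rw [pow_succ]; group
    rwa [e2] at h
  set d : ℕ → G := fun j => (y ^ j)⁻¹ * b * y ^ j with hd
  have h01 : r (d 0) (d 1) := hch 0
  have h12 : r (d 1) (d 2) := hch 1
  have h23 : r (d 2) (d 3) := hch 2
  have h34 : r (d 3) (d 4) := hch 3
  have h02 : r (d 0) (d 2) := htr h01 h12
  have h03 : r (d 0) (d 3) := htr h02 h23
  have h04 : r (d 0) (d 4) := htr h03 h34
  have h14 : r (d 1) (d 4) := htr h12 (htr h23 h34)
  have h24 : r (d 2) (d 4) := htr h23 h34
  -- key identity from the relation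
  have hkey : y ^ 2 = d 0 * (d 1) ^ (s + 1) * d 2 * (d 3) ^ (s + 1) * d 4 := by
    simp only [hd]
    rw [conj_pow_aux, conj_pow_aux]
    have h1 : ((y ^ 0)⁻¹ * b * y ^ 0) * ((y ^ 1)⁻¹ * b ^ (s + 1) * y ^ 1)
        * ((y ^ 2)⁻¹ * b * y ^ 2) * ((y ^ 3)⁻¹ * b ^ (s + 1) * y ^ 3)
        * ((y ^ 4)⁻¹ * b * y ^ 4)
        = (b⁻¹ * y * (b ^ (s + 1))⁻¹ * y * b⁻¹ * y * (b ^ (s + 1))⁻¹ * y * b⁻¹)⁻¹ * y ^ 4 := by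
      group
    rw [h1, ← hrel]; group
  -- lower bound : b^(2s+5) < y^2
  have low : r (d 0 * (d 0) ^ (s + 1) * d 0 * (d 0) ^ (s + 1) * d 0)
      (d 0 * (d 1) ^ (s + 1) * d 2 * (d 3) ^ (s + 1) * d 4) :=
    hmul (hmul (hmul (mulL (d 0) _ _ (hpow _ _ s h01)) h02) (hpow _ _ s h03)) h04
  have low_eq : d 0 * (d 0) ^ (s + 1) * d 0 * (d 0) ^ (s + 1) * d 0 = b ^ (2 * s + 5) := by
    simp only [hd]; group
  rw [low_eq, ← hkey] at low
  -- upper bound : y^2 < (y^4)⁻¹ * b^(2s+5) * y^4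
  have high : r (d 0 * (d 1) ^ (s + 1) * d 2 * (d 3) ^ (s + 1) * d 4)
      (d 4 * (d 4) ^ (s + 1) * d 4 * (d 4) ^ (s + 1) * d 4) :=
    mulR (d 4) _ _ (hmul (hmul (hmul h04 (hpow _ _ s h14)) h24) (hpow _ _ s h34))
  have high_eq : d 4 * (d 4) ^ (s + 1) * d 4 * (d 4) ^ (s + 1) * d 4
      = (y ^ 4)⁻¹ * b ^ (2 * s + 5) * y ^ 4 := by
    simp only [hd]
    rw [conj_pow_aux]; group
  rw [high_eq, ← hkey] at high
  -- conjugate the upper bound back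
  have high' := hinv (y ^ 4) ((y ^ 4)⁻¹) _ _ high
  have e1 : y ^ 4 * y ^ 2 * (y ^ 4)⁻¹ = y ^ 2 := by group
  have e2 : y ^ 4 * ((y ^ 4)⁻¹ * b ^ (2 * s + 5) * y ^ 4) * (y ^ 4)⁻¹ = b ^ (2 * s + 5) := by
    group
  rw [e1, e2] at high'
  exact hirr _ (htr low high')

/-- If `b, y` satisfy `y² = b⁻¹ y b^{-(s+1)} y b⁻¹ y b^{-(s+1)} y b⁻¹` (for `s ≥ 0`)
and `[y, b⁻¹] ≠ 1`, then `G` is not bi-orderable. -/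
theorem not_biOrderable_of_pretzel_relation {G : Type*} [Group G]
    (b y : G) (s : ℕ)
    (hrel : y ^ 2 =
        b⁻¹ * y * (b ^ (s + 1))⁻¹ * y * b⁻¹ * y * (b ^ (s + 1))⁻¹ * y * b⁻¹)
    (hne : y⁻¹ * b * y * b⁻¹ ≠ 1) :
    ¬ IsBiOrderable G := by
  rintro ⟨r, ht, hinv⟩
  haveI := ht
  have htr : ∀ {g h k : G}, r g h → r h k → r g k := fun h1 h2 => ht.trans _ _ _ h1 h2
  have hirr : ∀ g : G, ¬ r g g := fun g => ht.irrefl g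
  rcases (or_iff_not_imp_left.2 fun h1 => or_iff_not_imp_right.2 fun h2 => ht.trichotomous _ _ h1 h2 :
      r b (y⁻¹ * b * y) ∨ b = y⁻¹ * b * y ∨ r (y⁻¹ * b * y) b) with hlt | heq | hgt
  · exact pretzel_aux b y s hrel r hirr htr hinv hlt
  · apply hne
    rw [← heq]; group
  · exact pretzel_aux b y s hrel (fun g h => r h g) hirr (fun h1 h2 => htr h2 h1)
      (fun a c g h hgh => hinv a c h g hgh) hgt
end

section
/- For every natural number n ≥ 0, the real polynomial Δ(t) = t^{2n+8} − t^{2n+7} + (t^{2n+5} − t^{2n+4} + t^{2n+3} − t^{2n+2} + ⋯ − t⁴ + t³) − t + 1, where the middle sum is Σ_{j=3}^{2n+5} (−1)^{j+1} t^j (so odd powers of t from t³ to t^{2n+5} appear with coefficient +1 and even powers from t⁴ to t^{2n+4} with coefficient −1), has no positive real root; that is, Δ(t) ≠ 0 for all real t > 0. -/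
lemma alt_sum_mul (n : ℕ) (t : ℝ) :
    (t + 1) * (∑ j ∈ Finset.Icc 3 (2 * n + 5), (-1 : ℝ) ^ (j + 1) * t ^ j) =
      t ^ (2 * n + 6) + t ^ 3 := by
  induction n with
  | zero =>
      norm_num [Finset.sum_Icc_succ_top (by norm_num : (3:ℕ) ≤ 5),
        Finset.sum_Icc_succ_top (by norm_num : (3:ℕ) ≤ 4),
        Finset.Icc_self]
      ring
  | succ m ih =>
      have h1 : 2 * (m + 1) + 5 = (2 * m + 6) + 1 := by ring
      rw [h1, Finset.sum_Icc_succ_top (by omega),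
        show 2 * m + 6 = (2 * m + 5) + 1 from rfl,
        Finset.sum_Icc_succ_top (by omega)]
      have e1 : ((-1 : ℝ)) ^ (2 * m + 5 + 1 + 1) = -1 := by
        apply Odd.neg_one_pow; exact ⟨m + 3, by ring⟩
      have e2 : ((-1 : ℝ)) ^ (2 * m + 5 + 1 + 1 + 1) = 1 := by
        apply Even.neg_one_pow; exact ⟨m + 4, by ring⟩
      rw [e1, e2, mul_add, mul_add, ih]
      ring

open Finset in
/-- The Alexander polynomial
`Δ(t) = t^{2n+8} − t^{2n+7} + Σ_{j=3}^{2n+5} (−1)^{j+1} t^j − t + 1`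
of the `(−2, 3, 2n+5)`-pretzel knot has no positive real root. -/
theorem alexander_polynomial_no_positive_root (n : ℕ) (t : ℝ) (ht : 0 < t) :
    t ^ (2 * n + 8) - t ^ (2 * n + 7) +
        (∑ j ∈ Finset.Icc 3 (2 * n + 5), (-1 : ℝ) ^ (j + 1) * t ^ j) -
        t + 1 ≠ 0 := by
  intro h
  have key : (t + 1) * (t ^ (2 * n + 8) - t ^ (2 * n + 7) +
      (∑ j ∈ Finset.Icc 3 (2 * n + 5), (-1 : ℝ) ^ (j + 1) * t ^ j) -
      t + 1) =
      t ^ (2 * n + 6) * (t ^ 3 - t + 1) + (t ^ 3 - t ^ 2 + 1) := by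
    linear_combination alt_sum_mul n t
  rw [h, mul_zero] at key
  have hp1 : t ^ 3 - t + 1 > 0 := by nlinarith [sq_nonneg (t - 1), sq_nonneg t]
  have hp2 : t ^ 3 - t ^ 2 + 1 > 0 := by nlinarith [sq_nonneg (t - 1), sq_nonneg t]
  have hpow : (0:ℝ) < t ^ (2 * n + 6) := pow_pos ht _
  nlinarith [mul_pos hpow hp1]
end
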